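/- arXiv:1309.6298 — 2 statements merged into one kernel-verified Lean document; each statement's English description precedes it below -/
import Mathlib

section
/- Let R be a totally ordered idempotent semifield and let C ∈ M_n(R) with per C ≠ 0, where per C = Σ_{σ∈S_n} C_{1σ(1)}⋯C_{nσ(n)}. Then there exist vectors u, v ∈ (R∖{0})^n such that C_{ij} ≤ u_i·v_j for all i, j ∈ [n]; C_{iσ(i)} = u_i·v_{σ(i)} for every i ∈ [n] and every permutation σ with per C = Π_{i∈[n]} C_{iσ(i)}; and per C = Π_{i∈[n]} u_i · Π_{j∈[n]} v_j. -/
/-!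
Pick a permutation `σ₀` attaining `per C` (the idempotent sum of finitely many elements of a
chain is one of them) and divide the column `σ₀ k` of `C` by `C k (σ₀ k)`. The resulting matrix
`A` has unit diagonal and every permutation has weight `≤ 1`. Hence every closed walk has weight
`≤ 1`: a closed walk splits at a repeated vertex into two shorter ones, and a simple cycle,
completed by fixed points, is a permutation. So a walk longer than `n` is dominated by a shorter
walk from the same vertex, and `x i`, the sum of the weights of all walks of length `n` from `i`
(padded with diagonal steps), satisfies `1 ≤ x i` and `A i k * x k ≤ x i`. Then `u = x` and
`v (σ₀ k) = C k (σ₀ k) / x k` work; along an optimal permutation the inequalities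
`C i (σ i) ≤ u i * v (σ i)` have equal products of units, hence are equalities.
-/

open Finset

def perm {R : Type*} [CommSemiring R] {n : ℕ} (A : Matrix (Fin n) (Fin n) R) : R :=
  ∑ σ : Equiv.Perm (Fin n), ∏ i, A i (σ i)

theorem exists_mem_sum_eq_of_total {R ι : Type*} [IdemCommSemiring R]
    (htot : ∀ a b : R, a ≤ b ∨ b ≤ a) {s : Finset ι} (hs : s.Nonempty) (f : ι → R) :
    ∃ a ∈ s, ∑ i ∈ s, f i = f a := by
  induction hs using Finset.Nonempty.cons_induction with
  | singleton a => exact ⟨a, mem_singleton_self a, sum_singleton f a⟩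
  | cons a s _ _ ih =>
    obtain ⟨b, hb, hsum⟩ := ih
    rw [sum_cons, hsum]
    rcases htot (f a) (f b) with h | h
    · exact ⟨b, mem_cons_of_mem hb, h.add_eq_right⟩
    · exact ⟨a, mem_cons_self a s, h.add_eq_left⟩

theorem eq_of_le_of_prod_eq {M ι : Type*} [CommMonoid M] [PartialOrder M] [MulLeftMono M]
    {s : Finset ι} {f g : ι → M} (hle : ∀ i ∈ s, f i ≤ g i)
    (hprod : ∏ i ∈ s, f i = ∏ i ∈ s, g i) (hg : ∀ i ∈ s, IsUnit (g i)) {a : ι} (ha : a ∈ s) :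
    f a = g a := by
  classical
  have hunit : IsUnit (∏ i ∈ s.erase a, g i) :=
    IsUnit.prod_iff.mpr fun i hi => hg i (mem_of_mem_erase hi)
  refine hunit.mul_right_cancel (le_antisymm (mul_le_mul_left (hle a ha) _) ?_)
  calc g a * ∏ i ∈ s.erase a, g i = ∏ i ∈ s, f i := by rw [mul_prod_erase s g ha, hprod]
    _ = f a * ∏ i ∈ s.erase a, f i := (mul_prod_erase s f ha).symm
    _ ≤ f a * ∏ i ∈ s.erase a, g i :=
        mul_le_mul_right (prod_le_prod' fun i hi => hle i (mem_of_mem_erase hi)) _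

section Walks

variable {M ι : Type*} [CommMonoid M] (A : Matrix ι ι M)

def walkWeight (q : ℕ → ι) (m : ℕ) : M :=
  ∏ t ∈ range m, A (q t) (q (t + 1))

variable {A}

theorem walkWeight_congr {q q' : ℕ → ι} {m : ℕ} (h : ∀ t ≤ m, q t = q' t) :
    walkWeight A q m = walkWeight A q' m :=
  prod_congr rfl fun t ht => by rw [h t (mem_range.mp ht).le, h (t + 1) (mem_range.mp ht)]

theorem walkWeight_add (q : ℕ → ι) (m k : ℕ) :
    walkWeight A q (m + k) = walkWeight A q m * walkWeight A (fun t => q (m + t)) k := by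
  simp only [walkWeight, prod_range_add, add_assoc]

theorem walkWeight_cons (i : ι) (q : ℕ → ι) (m : ℕ) :
    walkWeight A (fun t => if t = 0 then i else q (t - 1)) (m + 1) =
      A i (q 0) * walkWeight A q m := by
  rw [walkWeight, prod_range_succ', mul_comm]
  simp only [walkWeight, if_pos, Nat.add_one_ne_zero, if_false, Nat.add_sub_cancel, zero_add]

-- The first factor is the walk with the closed subwalk `q a → ⋯ → q (a + k)` cut out.
theorem walkWeight_splice {q : ℕ → ι} {a k : ℕ} (hq : q a = q (a + k)) (l : ℕ) :
    walkWeight A q (a + k + l) =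
      walkWeight A (fun t => if t ≤ a then q t else q (t + k)) (a + l) *
        walkWeight A (fun t => q (a + t)) k := by
  rw [walkWeight_add, walkWeight_add, walkWeight_add]
  have hhead : walkWeight A (fun t => if t ≤ a then q t else q (t + k)) a = walkWeight A q a :=
    walkWeight_congr fun t ht => if_pos ht
  have htail : walkWeight A (fun t => if a + t ≤ a then q (a + t) else q (a + t + k)) l =
      walkWeight A (fun t => q (a + k + t)) l := by
    refine walkWeight_congr fun t _ => ?_
    rcases Nat.eq_zero_or_pos t with rfl | ht
    · simpa using hq
    · rw [if_neg (by omega)]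
      ring_nf
  rw [hhead, htail, mul_right_comm]

theorem walkWeight_pad (hdiag : ∀ c, A c c = 1) (q : ℕ → ι) {m N : ℕ} (h : m ≤ N) :
    walkWeight A (fun t => q (min t m)) N = walkWeight A q m := by
  obtain ⟨k, rfl⟩ := Nat.exists_eq_add_of_le h
  have hconst : walkWeight A (fun t => q (min (m + t) m)) k = 1 :=
    prod_eq_one fun t _ => by simp only [min_eq_right (Nat.le_add_right m _), hdiag]
  rw [walkWeight_add, hconst, mul_one]
  exact walkWeight_congr fun t ht => by rw [min_eq_left ht]

theorem exists_perm_prod_eq_walkWeight [Fintype ι] (hdiag : ∀ c, A c c = 1)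
    {q : ℕ → ι} {m : ℕ} (hclosed : q m = q 0) (hinj : Set.InjOn q (Set.Iio m)) :
    ∃ σ : Equiv.Perm ι, ∏ i, A i (σ i) = walkWeight A q m := by
  classical
  let f : Fin m ↪ ι := ⟨fun k => q k, fun k l h => Fin.ext (hinj k.2 l.2 h)⟩
  let σ := (finRotate m).viaFintypeEmbedding f
  have hsucc : ∀ k : Fin m, q (finRotate m k) = q (k + 1) := by
    obtain _ | m := m
    · exact fun k => k.elim0
    intro k
    rw [coe_finRotate]
    split_ifs with hk
    · rw [hk, Fin.val_last, hclosed]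
    · rfl
  refine ⟨σ, ?_⟩
  rw [← prod_subset (subset_univ (univ.map f)) fun i _ hi => ?_, prod_map]
  · simp only [σ, Equiv.Perm.viaFintypeEmbedding_apply_image]
    change ∏ k : Fin m, A (q k) (q (finRotate m k)) = _
    simp only [hsucc]
    exact Fin.prod_univ_eq_prod_range (fun t => A (q t) (q (t + 1))) m
  · rw [Equiv.Perm.viaFintypeEmbedding_apply_notMem_range, hdiag]
    simpa using hi

end Walks

section Subeigenvector

variable {R ι : Type*} [IdemCommSemiring R] [Fintype ι] {A : Matrix ι ι R}

theorem walkWeight_le_one_of_closed (hdiag : ∀ c, A c c = 1)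
    (hperm : ∀ σ : Equiv.Perm ι, ∏ i, A i (σ i) ≤ 1) (m : ℕ) (q : ℕ → ι) (hclosed : q m = q 0) :
    walkWeight A q m ≤ 1 := by
  induction m using Nat.strong_induction_on generalizing q with
  | _ m ih =>
  by_cases hinj : Set.InjOn q (Set.Iio m)
  · obtain ⟨σ, hσ⟩ := exists_perm_prod_eq_walkWeight hdiag hclosed hinj
    exact hσ ▸ hperm σ
  obtain ⟨a, b, hab, hbm, hq⟩ : ∃ a b, a < b ∧ b < m ∧ q a = q b := by
    simp only [Set.InjOn, Set.mem_Iio, not_forall] at hinj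
    obtain ⟨a, ha, b, hb, hq, hne⟩ := hinj
    rcases lt_or_gt_of_ne hne with h | h
    · exact ⟨a, b, h, hb, hq⟩
    · exact ⟨b, a, h, ha, hq.symm⟩
  obtain ⟨k, rfl⟩ := Nat.exists_eq_add_of_le hab.le
  obtain ⟨l, rfl⟩ := Nat.exists_eq_add_of_le hbm.le
  have hinner : q (a + k) = q (a + 0) := hq.symm
  have houter : (if a + l ≤ a then q (a + l) else q (a + l + k)) = if 0 ≤ a then q 0 else q k := by
    rw [if_pos (Nat.zero_le a), ← hclosed]
    split_ifs with hl
    · obtain rfl : l = 0 := by omega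
      exact hq
    · rw [Nat.add_right_comm]
  rw [walkWeight_splice hq]
  calc _ ≤ (1 : R) * 1 := mul_le_mul' (ih (a + l) (by omega) _ houter) (ih k (by omega) _ hinner)
    _ = 1 := mul_one 1

theorem exists_shorter_walk_of_card_lt (hdiag : ∀ c, A c c = 1)
    (hperm : ∀ σ : Equiv.Perm ι, ∏ i, A i (σ i) ≤ 1) (q : ℕ → ι) {m : ℕ}
    (hm : Fintype.card ι < m) :
    ∃ (q' : ℕ → ι) (m' : ℕ), m' < m ∧ q' 0 = q 0 ∧ walkWeight A q m ≤ walkWeight A q' m' := by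
  obtain ⟨a, b, hab, hbm, hq⟩ : ∃ a b, a < b ∧ b ≤ m ∧ q a = q b := by
    obtain ⟨a, b, hne, hq⟩ := Fintype.exists_ne_map_eq_of_card_lt
      (fun t : Fin (Fintype.card ι + 1) => q t) (by simp)
    rcases lt_or_gt_of_ne (Fin.val_ne_of_ne hne) with h | h
    · exact ⟨a, b, h, by omega, hq⟩
    · exact ⟨b, a, h, by omega, hq.symm⟩
  obtain ⟨k, rfl⟩ := Nat.exists_eq_add_of_le hab.le
  obtain ⟨l, rfl⟩ := Nat.exists_eq_add_of_le hbm
  refine ⟨fun t => if t ≤ a then q t else q (t + k), a + l, by omega, if_pos (Nat.zero_le a), ?_⟩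
  rw [walkWeight_splice hq]
  exact mul_le_of_le_one_right' (walkWeight_le_one_of_closed hdiag hperm k _ hq.symm)

theorem exists_one_le_subeigenvector (hdiag : ∀ c, A c c = 1)
    (hperm : ∀ σ : Equiv.Perm ι, ∏ i, A i (σ i) ≤ 1) :
    ∃ x : ι → R, (∀ i, 1 ≤ x i) ∧ ∀ i j, A i j * x j ≤ x i := by
  classical
  set N := Fintype.card ι
  -- `x i` sums the weights of the walks `i = p 0 → p 1 → ⋯ → p N`.
  let walksFrom (i : ι) : Finset (Fin (N + 1) → ι) := univ.filter fun p => p 0 = i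
  let w (p : Fin (N + 1) → ι) : R := walkWeight A (fun t => p (Fin.clamp t N)) N
  refine ⟨fun i => ∑ p ∈ walksFrom i, w p, fun i => ?_, fun i j => ?_⟩
  · calc 1 = w fun _ => i := (prod_eq_one fun _ _ => hdiag i).symm
      _ ≤ _ := single_le_sum (fun _ _ => zero_le) (by simp [walksFrom])
  rw [mul_sum]
  refine sum_induction _ (· ≤ _) (fun _ _ => add_le) zero_le fun p hp => ?_
  obtain ⟨q, m, hm, hq0, hle⟩ := exists_shorter_walk_of_card_lt hdiag hperm
    (fun t => if t = 0 then i else p (Fin.clamp (t - 1) N)) (Nat.lt_succ_self N)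
  let p' : Fin (N + 1) → ι := fun s => q (min s m)
  have hp' : p' ∈ walksFrom i := by simpa [walksFrom, p'] using hq0
  calc A i j * w p
      = walkWeight A (fun t => if t = 0 then i else p (Fin.clamp (t - 1) N)) (N + 1) := by
        rw [walkWeight_cons i (fun t => p (Fin.clamp t N)) N, show Fin.clamp 0 N = 0 from rfl,
          (mem_filter.mp hp).2]
    _ ≤ walkWeight A q m := hle
    _ = w p' := by
        rw [← walkWeight_pad hdiag q (Nat.lt_succ_iff.mp hm)]
        exact walkWeight_congr fun t ht => by simp [p', Fin.clamp, min_eq_left ht]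
    _ ≤ _ := single_le_sum (fun _ _ => zero_le) hp'

end Subeigenvector

section Scaling

open Ring

variable {R ι : Type*} [IdemCommSemiring R] [Fintype ι]

theorem prod_normalized_le_one {C : Matrix ι ι R} {σ₀ : Equiv.Perm ι}
    (hopt : ∀ σ : Equiv.Perm ι, ∏ i, C i (σ i) ≤ ∏ i, C i (σ₀ i))
    (hunit : ∀ k, IsUnit (C k (σ₀ k))) (σ : Equiv.Perm ι) :
    ∏ i, C i (σ₀ (σ i)) * (C (σ i) (σ₀ (σ i)))⁻¹ʳ ≤ 1 := by
  rw [prod_mul_distrib, Equiv.prod_comp σ fun k => (C k (σ₀ k))⁻¹ʳ]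
  calc _ ≤ (∏ i, C i (σ₀ i)) * ∏ k, (C k (σ₀ k))⁻¹ʳ := mul_le_mul_left (hopt (σ₀ * σ)) _
    _ = 1 := by
      rw [← prod_mul_distrib]
      exact prod_eq_one fun k _ => mul_inverse_cancel _ (hunit k)

theorem exists_scaling_of_sum_perm_ne_zero [DecidableEq ι] (htot : ∀ a b : R, a ≤ b ∨ b ≤ a)
    (hinv : ∀ a : R, a ≠ 0 → IsUnit a) (C : Matrix ι ι R)
    (hC : ∑ σ : Equiv.Perm ι, ∏ i, C i (σ i) ≠ 0) :
    ∃ u v : ι → R, (∀ i, u i ≠ 0) ∧ (∀ j, v j ≠ 0) ∧ (∀ i j, C i j ≤ u i * v j) ∧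
      (∀ σ : Equiv.Perm ι, ∏ i, C i (σ i) = ∑ τ : Equiv.Perm ι, ∏ i, C i (τ i) →
        ∀ i, C i (σ i) = u i * v (σ i)) ∧
      ∑ σ : Equiv.Perm ι, ∏ i, C i (σ i) = (∏ i, u i) * ∏ j, v j := by
  have : Nontrivial R := nontrivial_of_ne _ _ hC
  obtain ⟨σ₀, -, hσ₀⟩ :=
    exists_mem_sum_eq_of_total htot univ_nonempty fun σ : Equiv.Perm ι => ∏ i, C i (σ i)
  have hopt : ∀ σ : Equiv.Perm ι, ∏ i, C i (σ i) ≤ ∏ i, C i (σ₀ i) := fun σ =>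
    hσ₀ ▸ single_le_sum (f := fun σ : Equiv.Perm ι => ∏ i, C i (σ i)) (fun _ _ => zero_le)
      (mem_univ σ)
  have hunit : ∀ k, IsUnit (C k (σ₀ k)) := fun k =>
    hinv _ fun h => hC (hσ₀ ▸ prod_eq_zero (mem_univ k) h)
  obtain ⟨x, hx1, hx⟩ := exists_one_le_subeigenvector
    (A := fun i k => C i (σ₀ k) * (C k (σ₀ k))⁻¹ʳ)
    (fun c => mul_inverse_cancel _ (hunit c)) (prod_normalized_le_one hopt hunit)
  have hxunit : ∀ i, IsUnit (x i) := fun i =>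
    hinv _ fun h => one_ne_zero (le_antisymm (h ▸ hx1 i) zero_le)
  let v j := (x (σ₀.symm j))⁻¹ʳ * C (σ₀.symm j) j
  have hxv : ∀ k, x k * v (σ₀ k) = C k (σ₀ k) := fun k => by
    simp only [v, Equiv.symm_apply_apply, mul_inverse_cancel_left _ _ (hxunit k)]
  have hvunit : ∀ j, IsUnit (v j) := σ₀.surjective.forall.mpr fun k =>
    isUnit_of_mul_isUnit_right ((hxv k).symm ▸ hunit k)
  have hle : ∀ i j, C i j ≤ x i * v j := fun i => σ₀.surjective.forall.mpr fun k => by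
    calc C i (σ₀ k)
        = C i (σ₀ k) * (C k (σ₀ k))⁻¹ʳ * x k * v (σ₀ k) := by
          rw [mul_assoc _ (x k), hxv, inverse_mul_cancel_right _ _ (hunit k)]
      _ ≤ x i * v (σ₀ k) := mul_le_mul_left (hx i k) _
  have hprod : (∏ i, x i) * ∏ j, v j = ∑ σ : Equiv.Perm ι, ∏ i, C i (σ i) := by
    rw [← Equiv.prod_comp σ₀ v, ← prod_mul_distrib, hσ₀]
    exact prod_congr rfl fun k _ => hxv k
  refine ⟨x, v, fun i => (hxunit i).ne_zero, fun j => (hvunit j).ne_zero, hle,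
    fun σ hσ i => ?_, hprod.symm⟩
  refine eq_of_le_of_prod_eq (fun i _ => hle i (σ i)) ?_
    (fun i _ => (hxunit i).mul (hvunit (σ i))) (mem_univ i)
  rw [hσ, prod_mul_distrib, Equiv.prod_comp σ v, hprod]

end Scaling

/-- Hungarian scaling: over a totally ordered idempotent semifield `R` (idempotent
addition, total natural order `a ≤ b ↔ a + b = b`, every nonzero element invertible),
any matrix `C` with nonzero permanent admits vectors `u, v` of nonzero elements such
that `C_{ij} ≤ u_i v_j` for all `i, j`, with equality along every optimal permutation,
and `per C = Π_i u_i · Π_j v_j`. -/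
theorem stmt8 {R : Type*} [CommSemiring R]
    (hidem : ∀ a : R, a + a = a)
    (htot : ∀ a b : R, a + b = b ∨ a + b = a)
    (hinv : ∀ a : R, a ≠ 0 → IsUnit a)
    (n : ℕ) (C : Matrix (Fin n) (Fin n) R) (hC : perm C ≠ 0) :
    ∃ u v : Fin n → R, (∀ i, u i ≠ 0) ∧ (∀ j, v j ≠ 0) ∧
      (∀ i j, C i j + u i * v j = u i * v j) ∧
      (∀ σ : Equiv.Perm (Fin n), (∏ i, C i (σ i)) = perm C → ∀ i, C i (σ i) = u i * v (σ i)) ∧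
      perm C = (∏ i, u i) * ∏ j, v j := by
  -- Its order `a ≤ b` is `a + b = b` by definition, so the conclusions match up to defeq.
  let _ : IdemCommSemiring R := { ‹CommSemiring R›, IdemSemiring.ofSemiring hidem with }
  exact exists_scaling_of_sum_perm_ne_zero
    (fun a b => (htot a b).imp_right fun h => (add_comm b a).trans h) hinv C hC
end

section
/- Let S be a commutative semiring with a symmetry τ and a thin set S^∨ satisfying: (i) for all x ∈ S^∨ and b, d ∈ S, b ∇ x and x ∇ d imply b ∇ d; (ii) S^∨∖{0} is closed under multiplication; (iii) every element of S is a finite sum of elements of S^∨. Then for all b, c, d ∈ S and x ∈ S^∨, x ∇ b and c·x ∇ d imply c·b ∇ d; consequently S allows weak balance elimination. -/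
open Finset

variable {S : Type*}

/-- A symmetry of a commutative semiring `S` (written `-a := τ a`). -/
def IsSymmetry [CommSemiring S] (τ : S → S) : Prop :=
  (∀ a b, τ (a + b) = τ a + τ b) ∧ τ 0 = 0 ∧
  (∀ a b, τ (a * b) = a * τ b) ∧ ∀ a, τ (τ a) = a

/-- The set `S° = {a + τ a : a ∈ S}` of balanced elements. -/
def bSet [CommSemiring S] (τ : S → S) : Set S := {x | ∃ a, x = a + τ a}

/-- The balance relation: `x ∇ y ↔ x + τ y ∈ S°`. -/
def bal [CommSemiring S] (τ : S → S) (x y : S) : Prop := x + τ y ∈ bSet τ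

/-- `V` is a thin set: `V ⊆ (S ∖ S°) ∪ {0}`, `0 ∈ V`, and `V` contains all units. -/
def IsThin [CommSemiring S] (τ : S → S) (V : Set S) : Prop :=
  (0 : S) ∈ V ∧ (∀ x : S, IsUnit x → x ∈ V) ∧ ∀ x ∈ V, x = 0 ∨ x ∉ bSet τ

/-- `S` (with symmetry `τ` and thin set `V`) allows weak balance elimination:
`V ∖ {0}` is closed under multiplication, and the weak transitivity of systems of
balances holds. -/
def AllowsWeakElim [CommSemiring S] (τ : S → S) (V : Set S) : Prop :=
  (∀ x ∈ V, ∀ y ∈ V, x ≠ 0 → y ≠ 0 → x * y ∈ V ∧ x * y ≠ 0) ∧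
  ∀ (n p : ℕ) (a : S), a ∈ V → ∀ (C : Matrix (Fin n) (Fin p) S) (b : Fin p → S)
    (d : Fin n → S) (x : Fin p → S), (∀ j, x j ∈ V) →
    (∀ j, bal τ (a * x j) (b j)) → (∀ i, bal τ (∑ j, C i j * x j) (d i)) →
    ∀ i, bal τ (∑ j, C i j * b j) (a * d i)

/-- `S` allows strong balance elimination: weak balance elimination, plus the fact that
two balanced thin elements are equal. -/
def AllowsStrongElim [CommSemiring S] (τ : S → S) (V : Set S) : Prop :=
  AllowsWeakElim τ V ∧ ∀ x ∈ V, ∀ y ∈ V, bal τ x y → x = y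

/-- The sign of a permutation in `S`: `1` for even permutations and `-1 = τ 1` for odd
ones. -/
noncomputable def sgnS [CommSemiring S] (τ : S → S) {n : ℕ} (σ : Equiv.Perm (Fin n)) : S :=
  if Equiv.Perm.sign σ = 1 then 1 else τ 1

/-- `(-1)^k` in `S`: `1` for even `k` and `τ 1` for odd `k`. -/
def sgnPow [CommSemiring S] (τ : S → S) (k : ℕ) : S := if Even k then 1 else τ 1

/-- The determinant of a matrix over a commutative semiring with symmetry `τ`. -/
noncomputable def sdet [CommSemiring S] (τ : S → S) {n : ℕ}
    (A : Matrix (Fin n) (Fin n) S) : S :=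
  ∑ σ : Equiv.Perm (Fin n), sgnS τ σ * ∏ i, A i (σ i)

/-- The adjugate matrix: `(A^adj)_{ij} = (-1)^{i+j} · det A(j,i)`, where `A(j,i)` is the
submatrix of `A` with row `j` and column `i` deleted. -/
noncomputable def sadj [CommSemiring S] (τ : S → S) {n : ℕ}
    (A : Matrix (Fin (n + 1)) (Fin (n + 1)) S) : Matrix (Fin (n + 1)) (Fin (n + 1)) S :=
  Matrix.of fun i j =>
    sgnPow τ (i.val + j.val) * sdet τ (A.submatrix j.succAbove i.succAbove)

/-! For thin `x` with `x ∇ b` and a generator `c ∈ V`, the product `c x` is again thin and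
`c b ∇ c x`, so transitivity through `c x` turns any balance `c x ∇ d` into `c b ∇ d`.
Such replacements can be added, because a summand may be moved across `∇` to the other
side; since `V` generates `S` additively, the replacement of `c x` by `c b` is valid for every `c`.
Weak balance elimination follows by scaling the row balance `∑ⱼ Cᵢⱼ xⱼ ∇ dᵢ` by `a` and
replacing each `Cᵢⱼ (a xⱼ)` by `Cᵢⱼ bⱼ`. -/

section Balance

variable [CommSemiring S] {τ : S → S}

namespace IsSymmetry

theorem map_add (hτ : IsSymmetry τ) (a b : S) : τ (a + b) = τ a + τ b := hτ.1 a b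

theorem map_mul (hτ : IsSymmetry τ) (a b : S) : τ (a * b) = a * τ b := hτ.2.2.1 a b

theorem map_map (hτ : IsSymmetry τ) (a : S) : τ (τ a) = a := hτ.2.2.2 a

end IsSymmetry

theorem map_mem_bSet (hτ : IsSymmetry τ) {u : S} (hu : u ∈ bSet τ) : τ u ∈ bSet τ := by
  obtain ⟨a, rfl⟩ := hu
  exact ⟨τ a, by rw [hτ.map_add, hτ.map_map, add_comm]⟩

theorem mul_mem_bSet (hτ : IsSymmetry τ) (c : S) {u : S} (hu : u ∈ bSet τ) :
    c * u ∈ bSet τ := by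
  obtain ⟨a, rfl⟩ := hu
  exact ⟨c * a, by rw [mul_add, hτ.map_mul]⟩

theorem bal_symm (hτ : IsSymmetry τ) {u v : S} (h : bal τ u v) : bal τ v u := by
  have h' := map_mem_bSet hτ h
  rwa [hτ.map_add, hτ.map_map, add_comm] at h'

theorem bal_mul_left (hτ : IsSymmetry τ) (c : S) {u v : S} (h : bal τ u v) :
    bal τ (c * u) (c * v) := by
  have h' := mul_mem_bSet hτ c h
  rwa [mul_add, ← hτ.map_mul] at h'

theorem bal_add_left_iff (hτ : IsSymmetry τ) (u v w : S) :
    bal τ (u + v) w ↔ bal τ u (τ v + w) := by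
  rw [bal, bal, hτ.map_add, hτ.map_map, add_assoc]

variable (τ) in
def balSubst (hτ : IsSymmetry τ) : AddSubmonoid (S × S) where
  carrier := {p | ∀ d, bal τ p.1 d → bal τ p.2 d}
  zero_mem' _ h := h
  add_mem' {p q} hp hq d h := by
    rw [Prod.fst_add, bal_add_left_iff hτ] at h
    have h' := hp _ h
    rw [← bal_add_left_iff hτ, add_comm, bal_add_left_iff hτ] at h'
    rw [Prod.snd_add, add_comm, bal_add_left_iff hτ]
    exact hq _ h'

end Balance

section Elimination

variable [CommSemiring S] {τ : S → S} {V : Set S}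

theorem mul_mem_of_mul_mem_ne_zero
    (h2 : ∀ x ∈ V, ∀ y ∈ V, x ≠ 0 → y ≠ 0 → x * y ∈ V ∧ x * y ≠ 0)
    {x y : S} (hx : x ∈ V) (hy : y ∈ V) : x * y ∈ V := by
  rcases eq_or_ne x 0 with rfl | hx0
  · rwa [zero_mul]
  rcases eq_or_ne y 0 with rfl | hy0
  · rwa [mul_zero]
  exact (h2 x hx y hy hx0 hy0).1

theorem mul_mem_balSubst (hτ : IsSymmetry τ)
    (h1 : ∀ x ∈ V, ∀ b d : S, bal τ b x → bal τ x d → bal τ b d)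
    (h2 : ∀ x ∈ V, ∀ y ∈ V, x ≠ 0 → y ≠ 0 → x * y ∈ V ∧ x * y ≠ 0)
    (h3 : ∀ s : S, ∃ l : List S, (∀ x ∈ l, x ∈ V) ∧ l.sum = s)
    {x b : S} (hx : x ∈ V) (hxb : bal τ x b) (c : S) :
    (c * x, c * b) ∈ balSubst τ hτ := by
  obtain ⟨l, hl, rfl⟩ := h3 c
  induction l with
  | nil => simpa only [List.sum_nil, zero_mul, Prod.mk_zero_zero] using (balSubst τ hτ).zero_mem
  | cons c₀ t ih =>
    have hc₀x : c₀ * x ∈ V := mul_mem_of_mul_mem_ne_zero h2 (hl c₀ List.mem_cons_self) hx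
    have head : (c₀ * x, c₀ * b) ∈ balSubst τ hτ :=
      fun d => h1 _ hc₀x _ d (bal_mul_left hτ c₀ (bal_symm hτ hxb))
    rw [List.sum_cons, add_mul, add_mul, ← Prod.mk_add_mk]
    exact add_mem head (ih fun y hy => hl y (List.mem_cons_of_mem _ hy))

theorem allowsWeakElim_of_mul_mem_balSubst (hτ : IsSymmetry τ)
    (h2 : ∀ x ∈ V, ∀ y ∈ V, x ≠ 0 → y ≠ 0 → x * y ∈ V ∧ x * y ≠ 0)
    (hsubst : ∀ x ∈ V, ∀ b, bal τ x b → ∀ c, (c * x, c * b) ∈ balSubst τ hτ) :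
    AllowsWeakElim τ V := by
  refine ⟨h2, fun n p a ha C b d x hx hab hCd i => ?_⟩
  have hrow : bal τ (∑ j, C i j * (a * x j)) (a * d i) := by
    simpa only [Finset.mul_sum, mul_left_comm] using bal_mul_left hτ a (hCd i)
  have hsum : (∑ j, C i j * (a * x j), ∑ j, C i j * b j) ∈ balSubst τ hτ := by
    rw [prod_mk_sum]
    exact sum_mem fun j _ => hsubst _ (mul_mem_of_mul_mem_ne_zero h2 ha (hx j)) _ (hab j) (C i j)
  exact hsum _ hrow

end Elimination

theorem stmt11_general [CommSemiring S] (τ : S → S) (hτ : IsSymmetry τ)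
    (V : Set S)
    (h1 : ∀ x ∈ V, ∀ b d : S, bal τ b x → bal τ x d → bal τ b d)
    (h2 : ∀ x ∈ V, ∀ y ∈ V, x ≠ 0 → y ≠ 0 → x * y ∈ V ∧ x * y ≠ 0)
    (h3 : ∀ s : S, ∃ l : List S, (∀ x ∈ l, x ∈ V) ∧ l.sum = s) :
    (∀ b c d : S, ∀ x ∈ V, bal τ x b → bal τ (c * x) d → bal τ (c * b) d) ∧
    AllowsWeakElim τ V := by
  have hsubst : ∀ x ∈ V, ∀ b, bal τ x b → ∀ c, (c * x, c * b) ∈ balSubst τ hτ :=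
    fun x hx b hxb => mul_mem_balSubst hτ h1 h2 h3 hx hxb
  exact ⟨fun b c d x hx hxb => hsubst x hx b hxb c d,
    allowsWeakElim_of_mul_mem_balSubst hτ h2 hsubst⟩

/-- If for thin `x` the balances `b ∇ x` and `x ∇ d` imply `b ∇ d`, `V ∖ {0}` is closed
under multiplication, and `S` is additively generated by `V`, then the weak transitivity
of scalar balances holds, and consequently `S` allows weak balance elimination. -/
theorem stmt11 [CommSemiring S] (τ : S → S) (hτ : IsSymmetry τ)
    (V : Set S) (hne : bSet τ ≠ Set.univ) (hV : IsThin τ V)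
    (h1 : ∀ x ∈ V, ∀ b d : S, bal τ b x → bal τ x d → bal τ b d)
    (h2 : ∀ x ∈ V, ∀ y ∈ V, x ≠ 0 → y ≠ 0 → x * y ∈ V ∧ x * y ≠ 0)
    (h3 : ∀ s : S, ∃ l : List S, (∀ x ∈ l, x ∈ V) ∧ l.sum = s) :
    (∀ b c d : S, ∀ x ∈ V, bal τ x b → bal τ (c * x) d → bal τ (c * b) d) ∧
    AllowsWeakElim τ V :=
  stmt11_general τ hτ V h1 h2 h3
end
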